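/- Let WN = (P,T,F,i,o) be a sound acyclic free-choice workflow net (AFW-net) and let (x,y) ∈ ∥. Then for every node a ∈ HasPath(x), we have y ∉ HasPath(a), and symmetrically for every node b ∈ HasPath(y), we have x ∉ HasPath(b). That is, no node reachable by a path from x has a path to y, and vice versa. -/

import Mathlib

/-- A Petri net: finite disjoint sets of places and transitions and a flow relation
`F ⊆ (P × T) ∪ (T × P)`. -/
structure PetriNet (α : Type) [DecidableEq α] where
  places : Finset α
  transitions : Finset α
  flow : Finset (α × α)
  disjoint_pt : Disjoint places transitions
  flow_mem : ∀ e ∈ flow,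
    (e.1 ∈ places ∧ e.2 ∈ transitions) ∨ (e.1 ∈ transitions ∧ e.2 ∈ places)

namespace PetriNet

variable {α : Type} [DecidableEq α]

/-- All nodes `P ∪ T` of the net. -/
def nodes (N : PetriNet α) : Finset α := N.places ∪ N.transitions

/-- The preset `•x` of a node. -/
def preset (N : PetriNet α) (x : α) : Finset α :=
  N.nodes.filter (fun p => (p, x) ∈ N.flow)

/-- The postset `x•` of a node. -/
def postset (N : PetriNet α) (x : α) : Finset α :=
  N.nodes.filter (fun s => (x, s) ∈ N.flow)

/-- A path: a nonempty sequence of nodes, each consecutive pair related by the flow. -/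
def IsPath (N : PetriNet α) (w : List α) : Prop :=
  w ≠ [] ∧ (∀ x ∈ w, x ∈ N.nodes) ∧ w.Chain' (fun a b => (a, b) ∈ N.flow)

/-- An acyclic path: a path whose nodes are pairwise distinct. -/
def IsAcyclicPath (N : PetriNet α) (w : List α) : Prop :=
  N.IsPath w ∧ w.Nodup

/-- There is an acyclic path from `x` to `y`. -/
def HasAcyclicPath (N : PetriNet α) (x y : α) : Prop :=
  ∃ w, N.IsAcyclicPath w ∧ w.head? = some x ∧ w.getLast? = some y

/-- `HasPath(x)`: the set of all nodes to which `x` has an acyclic path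
(including `x` itself, via the trivial path `(x)` when `x` is a node). -/
def HasPathSet (N : PetriNet α) (x : α) : Set α := {y | N.HasAcyclicPath x y}

/-- A net is acyclic iff no node has a nontrivial path to itself. -/
def Acyclic (N : PetriNet α) : Prop :=
  ∀ x, ¬ ∃ w, N.IsPath w ∧ 2 ≤ w.length ∧ w.head? = some x ∧ w.getLast? = some x

/-- A transition `t` is enabled in marking `M` iff all its input places carry a token. -/
def Enabled (N : PetriNet α) (M : α → ℕ) (t : α) : Prop :=
  t ∈ N.transitions ∧ ∀ p ∈ N.preset t, 1 ≤ M p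

/-- Firing `t` consumes one token from each input place and produces one on each output place. -/
def fire (N : PetriNet α) (M : α → ℕ) (t : α) : α → ℕ := fun p =>
  (M p - (if p ∈ N.preset t then 1 else 0)) + (if p ∈ N.postset t then 1 else 0)

/-- A step `M —t→ M'`. -/
def Step (N : PetriNet α) (M : α → ℕ) (t : α) (M' : α → ℕ) : Prop :=
  N.Enabled M t ∧ M' = N.fire M t

/-- Reachability via finite occurrence sequences. -/
def Reachable (N : PetriNet α) : (α → ℕ) → (α → ℕ) → Prop :=
  Relation.ReflTransGen (fun M M' => ∃ t, N.Step M t M')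

/-- Liveness with respect to an initial marking. -/
def Live (N : PetriNet α) (M₀ : α → ℕ) : Prop :=
  ∀ M, N.Reachable M₀ M → ∀ t ∈ N.transitions, ∃ M', N.Reachable M M' ∧ N.Enabled M' t

/-- Boundedness with respect to an initial marking. -/
def Bounded (N : PetriNet α) (M₀ : α → ℕ) : Prop :=
  ∃ n : ℕ, ∀ M, N.Reachable M₀ M → ∀ p ∈ N.places, M p ≤ n

/-- Free-choice: every place with more than one output transition is the unique
input of each of those transitions. -/
def FreeChoice (N : PetriNet α) : Prop :=
  ∀ p ∈ N.places, 1 < (N.postset p).card → ∀ t ∈ N.postset p, N.preset t = {p}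

/-- A node is active in `M` iff it is a place carrying a token or an enabled transition. -/
def Active (N : PetriNet α) (x : α) (M : α → ℕ) : Prop :=
  (x ∈ N.places ∧ 1 ≤ M x) ∨ (x ∈ N.transitions ∧ N.Enabled M x)

/-- One unfolding of the defining clauses of the concurrency relation. -/
def concStep (N : PetriNet α) (M₀ : α → ℕ) (R : Set (α × α)) : Set (α × α) :=
  {q | q.1 ≠ q.2 ∧
    (∃ M, N.Reachable M₀ M ∧ N.Active q.1 M ∧ N.Active q.2 M) ∧
    (q.1 ∈ N.transitions → q.2 ∈ N.places → ∀ z ∈ N.preset q.1, (z, q.2) ∈ R) ∧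
    (q.1 ∈ N.places → q.2 ∈ N.transitions → ∀ z ∈ N.preset q.2, (z, q.1) ∈ R) ∧
    (q.1 ∈ N.transitions → q.2 ∈ N.transitions →
      ∀ z ∈ N.preset q.1, ∀ z' ∈ N.preset q.2, (z, z') ∈ R)}

/-- The concurrency relation `∥`: the greatest relation consistent with its
defining clauses (Def. of concurrency). -/
def Concurrent (N : PetriNet α) (M₀ : α → ℕ) : Set (α × α) :=
  ⋃₀ {R | R ⊆ N.concStep M₀ R}

/-- The number of places on `w` carrying at least one token in `M`. -/
def tokensOn (N : PetriNet α) (M : α → ℕ) (w : List α) : ℕ :=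
  (w.toFinset.filter (fun p => p ∈ N.places ∧ 1 ≤ M p)).card

end PetriNet

/-- A workflow net: a Petri net with a source place `i` (`•i = ∅`), a sink place `o`
(`o• = ∅`), and every node on a path from `i` to `o`. -/
structure WorkflowNet (α : Type) [DecidableEq α] extends PetriNet α where
  source : α
  sink : α
  source_mem : source ∈ places
  sink_mem : sink ∈ places
  source_no_pre : toPetriNet.preset source = ∅
  sink_no_post : toPetriNet.postset sink = ∅
  all_on_path : ∀ x ∈ toPetriNet.nodes, ∃ w, toPetriNet.IsPath w ∧
    w.head? = some source ∧ w.getLast? = some sink ∧ x ∈ w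

namespace WorkflowNet

variable {α : Type} [DecidableEq α]

/-- The initial marking: one token on the source, none elsewhere. -/
def initialMarking (W : WorkflowNet α) : α → ℕ := fun p => if p = W.source then 1 else 0

/-- The terminal marking: one token on the sink, none elsewhere. -/
def terminalMarking (W : WorkflowNet α) : α → ℕ := fun p => if p = W.sink then 1 else 0

/-- Soundness of a workflow net. -/
def Sound (W : WorkflowNet α) : Prop :=
  (∀ M, W.toPetriNet.Reachable W.initialMarking M →
    W.toPetriNet.Reachable M W.terminalMarking ∧ (1 ≤ M W.sink → M = W.terminalMarking)) ∧
  (∀ t ∈ W.transitions, ∃ M M', W.toPetriNet.Reachable W.initialMarking M ∧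
    W.toPetriNet.Step M t M')

end WorkflowNet

/-
Concurrency is the greatest relation closed under its defining clauses, so it suffices to show
that every post-fixed relation `R` only relates nodes not connected by a path. The clauses for
transitions reduce a pair of `R` to pairs of input places, which have fewer ancestors; in the end
one reaches two distinct places marked in a common reachable marking.

For those, soundness and free choice exclude a token on a place `p` together with a further token
on a place `q` reachable from `p` (`p = q` included: the net is safe). Follow a run from such a
marking to the final marking up to the first transition `t` consuming one of the two tokens. If it
consumes the token on `q`, that token reappears further down the path. If it consumes the one on
`p`, then by free choice the first transition of the path from `p` to `q` can fire instead, moving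
that token along the path. Either way a configuration of the same kind is reached whose two places
have fewer descendants in total.
-/

open Relation

namespace PetriNet

variable {α : Type} [DecidableEq α] {N : PetriNet α}

def Edge (N : PetriNet α) (a b : α) : Prop := (a, b) ∈ N.flow

lemma mem_preset {a x : α} : a ∈ N.preset x ↔ N.Edge a x := by
  rw [preset, Finset.mem_filter, nodes, Finset.mem_union]
  refine ⟨And.right, fun h => ⟨?_, h⟩⟩
  rcases N.flow_mem _ h with h' | h' <;> simp [h'.1]

lemma mem_postset {b x : α} : b ∈ N.postset x ↔ N.Edge x b := by
  rw [postset, Finset.mem_filter, nodes, Finset.mem_union]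
  refine ⟨And.right, fun h => ⟨?_, h⟩⟩
  rcases N.flow_mem _ h with h' | h' <;> simp [h'.2]

lemma ne_of_mem_places_of_mem_transitions {p t : α} (hp : p ∈ N.places)
    (ht : t ∈ N.transitions) : p ≠ t := by
  rintro rfl
  exact Finset.disjoint_left.mp N.disjoint_pt hp ht

namespace Edge

variable {a b : α}

lemma left_mem_nodes (h : N.Edge a b) : a ∈ N.nodes := by
  rw [nodes, Finset.mem_union]
  rcases N.flow_mem _ h with h' | h'
  exacts [Or.inl h'.1, Or.inr h'.1]

lemma right_mem_nodes (h : N.Edge a b) : b ∈ N.nodes := by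
  rw [nodes, Finset.mem_union]
  rcases N.flow_mem _ h with h' | h'
  exacts [Or.inr h'.2, Or.inl h'.2]

lemma mem_transitions (h : N.Edge a b) (ha : a ∈ N.places) : b ∈ N.transitions := by
  rcases N.flow_mem _ h with h' | h'
  exacts [h'.2, absurd rfl (ne_of_mem_places_of_mem_transitions ha h'.1)]

lemma mem_places (h : N.Edge a b) (ha : a ∈ N.transitions) : b ∈ N.places := by
  rcases N.flow_mem _ h with h' | h'
  exacts [absurd rfl (ne_of_mem_places_of_mem_transitions h'.1 ha), h'.2]

lemma left_mem_places (h : N.Edge a b) (hb : b ∈ N.transitions) : a ∈ N.places := by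
  rcases N.flow_mem _ h with h' | h'
  exacts [h'.1, absurd rfl (ne_of_mem_places_of_mem_transitions h'.2 hb)]

end Edge

lemma HasAcyclicPath.reflTransGen {x y : α} (h : N.HasAcyclicPath x y) :
    ReflTransGen N.Edge x y := by
  obtain ⟨w, ⟨⟨hne, -, hchain⟩, -⟩, hx, hy⟩ := h
  rw [List.head?_eq_some_head hne, Option.some_inj] at hx
  rw [List.getLast?_eq_some_getLast hne, Option.some_inj] at hy
  exact hx ▸ hy ▸ List.relationReflTransGen_of_exists_isChain w hchain hne

lemma Acyclic.not_transGen_self (hacyc : N.Acyclic) (x : α) : ¬ TransGen N.Edge x x := by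
  intro h
  obtain ⟨b, hxb, hbx⟩ := TransGen.head'_iff.mp h
  obtain ⟨l, hchain, hlast⟩ := List.exists_isChain_cons_of_relationReflTransGen hbx
  refine hacyc x ⟨x :: b :: l, ⟨List.cons_ne_nil _ _, ?_, ?_⟩, by simp, rfl, ?_⟩
  · exact (List.isChain_cons_cons.mpr ⟨hxb, hchain⟩).backwards_induction (· ∈ N.nodes) _
      (fun _ _ h _ => Edge.left_mem_nodes h) fun _ => by
        rw [List.getLast_cons (List.cons_ne_nil _ _), hlast]; exact hxb.left_mem_nodes
  · exact List.isChain_cons_cons.mpr ⟨hxb, hchain⟩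
  · rw [List.getLast?_eq_some_getLast (List.cons_ne_nil _ _),
      List.getLast_cons (List.cons_ne_nil _ _), hlast]

lemma Acyclic.not_reflTransGen_of_edge (hacyc : N.Acyclic) {a b : α} (h : N.Edge a b) :
    ¬ ReflTransGen N.Edge b a :=
  fun h' => hacyc.not_transGen_self a (.head' h h')

open Classical in
noncomputable def descendants (N : PetriNet α) (x : α) : Finset α :=
  {y ∈ N.nodes | ReflTransGen N.Edge x y}

open Classical in
noncomputable def ancestors (N : PetriNet α) (x : α) : Finset α :=
  {y ∈ N.nodes | ReflTransGen N.Edge y x}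

lemma mem_descendants {x y : α} :
    y ∈ N.descendants x ↔ y ∈ N.nodes ∧ ReflTransGen N.Edge x y := by
  simp only [descendants, Finset.mem_filter]

lemma mem_ancestors {x y : α} :
    y ∈ N.ancestors x ↔ y ∈ N.nodes ∧ ReflTransGen N.Edge y x := by
  simp only [ancestors, Finset.mem_filter]

lemma card_descendants_lt (hacyc : N.Acyclic) {a b : α} (h : N.Edge a b) :
    (N.descendants b).card < (N.descendants a).card := by
  have hsub : N.descendants b ⊆ N.descendants a := fun y hy =>
    mem_descendants.mpr ⟨(mem_descendants.mp hy).1, .head h (mem_descendants.mp hy).2⟩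
  refine Finset.card_lt_card ((Finset.ssubset_iff_of_subset hsub).mpr ⟨a, ?_, ?_⟩)
  · exact mem_descendants.mpr ⟨h.left_mem_nodes, .refl⟩
  · exact fun ha => hacyc.not_reflTransGen_of_edge h (mem_descendants.mp ha).2

lemma card_ancestors_lt (hacyc : N.Acyclic) {a b : α} (h : N.Edge a b) :
    (N.ancestors a).card < (N.ancestors b).card := by
  have hsub : N.ancestors a ⊆ N.ancestors b := fun y hy =>
    mem_ancestors.mpr ⟨(mem_ancestors.mp hy).1, .tail (mem_ancestors.mp hy).2 h⟩
  refine Finset.card_lt_card ((Finset.ssubset_iff_of_subset hsub).mpr ⟨b, ?_, ?_⟩)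
  · exact mem_ancestors.mpr ⟨h.right_mem_nodes, .refl⟩
  · exact fun hb => hacyc.not_reflTransGen_of_edge h (mem_ancestors.mp hb).2

def MarksPair (M : α → ℕ) (p q : α) : Prop :=
  if p = q then 2 ≤ M p else 1 ≤ M p ∧ 1 ≤ M q

namespace MarksPair

variable {M M' : α → ℕ} {p q : α}

lemma symm (h : MarksPair M p q) : MarksPair M q p := by
  unfold MarksPair at h ⊢
  split_ifs at h ⊢ with hpq hqp hqp
  · exact hqp ▸ h
  · exact absurd hpq.symm hqp
  · exact absurd hqp.symm hpq
  · exact h.symm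

lemma one_le_left (h : MarksPair M p q) : 1 ≤ M p := by
  unfold MarksPair at h
  split_ifs at h
  exacts [by omega, h.1]

lemma mono (h : MarksPair M p q) (hp : M p ≤ M' p) (hq : M q ≤ M' q) : MarksPair M' p q := by
  unfold MarksPair at h ⊢
  split_ifs at h ⊢ <;> omega

end MarksPair

lemma le_fire_of_not_mem_preset {M : α → ℕ} {t p : α} (hp : p ∉ N.preset t) :
    M p ≤ N.fire M t p := by
  simp [fire, hp]

lemma marksPair_fire {M : α → ℕ} {t p s : α} (hs : s ∈ N.postset t)
    (hp : p ∉ N.preset t ∧ 1 ≤ M p ∨ 2 ≤ M p) : MarksPair (N.fire M t) p s := by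
  unfold MarksPair fire
  by_cases hpt : p ∈ N.preset t <;> by_cases hps : p ∈ N.postset t <;>
    split_ifs <;> simp_all <;> omega

lemma exists_consuming_step {M M' : α → ℕ} {p q : α} (hrun : N.Reachable M M')
    (h : MarksPair M p q) (h' : ¬ MarksPair M' p q) :
    ∃ M₁ t, N.Reachable M M₁ ∧ N.Enabled M₁ t ∧ MarksPair M₁ p q ∧
      (p ∈ N.preset t ∨ q ∈ N.preset t) := by
  induction hrun using ReflTransGen.head_induction_on with
  | refl => exact absurd h h'
  | head hstep _ ih =>
    obtain ⟨t, hen, rfl⟩ := hstep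
    by_cases hconsumed : p ∈ N.preset t ∨ q ∈ N.preset t
    · exact ⟨_, t, .refl, hen, h, hconsumed⟩
    · obtain ⟨hp, hq⟩ := not_or.mp hconsumed
      obtain ⟨M₁, t', hrun, hrest⟩ :=
        ih (h.mono (le_fire_of_not_mem_preset hp) (le_fire_of_not_mem_preset hq))
      exact ⟨M₁, t', .head ⟨t, hen, rfl⟩ hrun, hrest⟩

lemma FreeChoice.preset_eq (hfc : N.FreeChoice) {p t t' : α} (hp : p ∈ N.places)
    (ht : N.Edge p t) (ht' : N.Edge p t') : N.preset t = N.preset t' := by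
  obtain rfl | hne := eq_or_ne t t'
  · rfl
  have hcard : 1 < (N.postset p).card :=
    Finset.one_lt_card.mpr ⟨t, mem_postset.mpr ht, t', mem_postset.mpr ht', hne⟩
  rw [hfc p hp hcard t (mem_postset.mpr ht), hfc p hp hcard t' (mem_postset.mpr ht')]

def Incomparable (N : PetriNet α) (u v : α) : Prop :=
  ¬ ReflTransGen N.Edge u v ∧ ¬ ReflTransGen N.Edge v u

lemma Incomparable.symm {u v : α} (h : N.Incomparable u v) : N.Incomparable v u :=
  ⟨h.2, h.1⟩

lemma incomparable_of_forall_preset {u v : α} (hu : (N.preset u).Nonempty) (huv : u ≠ v)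
    (h : ∀ z ∈ N.preset u, N.Incomparable z v) : N.Incomparable u v := by
  refine ⟨fun huv' => ?_, fun hvu => ?_⟩
  · obtain ⟨z, hz⟩ := hu
    exact (h z hz).1 (.head (mem_preset.mp hz) huv')
  · obtain rfl | ⟨c, hvc, hcu⟩ := hvu.cases_tail
    · exact huv rfl
    · exact (h c (mem_preset.mpr hcu)).2 hvc

theorem incomparable_of_mem_of_subset_concStep (hacyc : N.Acyclic)
    (hpre : ∀ t ∈ N.transitions, (N.preset t).Nonempty)
    {M₀ : α → ℕ} (hsafe : ∀ M, N.Reachable M₀ M → ∀ p ∈ N.places, ∀ q ∈ N.places,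
      p ≠ q → 1 ≤ M p → 1 ≤ M q → N.Incomparable p q)
    {R : Set (α × α)} (hR : R ⊆ N.concStep M₀ R) {u v : α} (huv : (u, v) ∈ R) :
    N.Incomparable u v := by
  have hclauses := hR huv
  simp only [concStep, Set.mem_ofPred_eq] at hclauses
  obtain ⟨hne, ⟨M, hM, hu, hv⟩, hTP, hPT, hTT⟩ := hclauses
  have ih : ∀ {z z' : α}, (z, z') ∈ R →
      (N.ancestors z).card + (N.ancestors z').card <
        (N.ancestors u).card + (N.ancestors v).card → N.Incomparable z z' :=
    fun hzz' _ => incomparable_of_mem_of_subset_concStep hacyc hpre hsafe hR hzz'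
  rcases hu with ⟨hu, hMu⟩ | ⟨hu, -⟩ <;> rcases hv with ⟨hv, hMv⟩ | ⟨hv, -⟩
  · exact hsafe M hM u hu v hv hne hMu hMv
  · refine (incomparable_of_forall_preset (hpre v hv) (Ne.symm hne) fun z hz =>
      ih (hPT hu hv z hz) ?_).symm
    have := card_ancestors_lt hacyc (mem_preset.mp hz)
    omega
  · refine incomparable_of_forall_preset (hpre u hu) hne fun z hz => ih (hTP hu hv z hz) ?_
    have := card_ancestors_lt hacyc (mem_preset.mp hz)
    omega
  · refine incomparable_of_forall_preset (hpre u hu) hne fun z hz =>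
      (incomparable_of_forall_preset (hpre v hv) ?_ fun z' hz' =>
        (ih (hTT hu hv z hz z' hz') ?_).symm).symm
    · exact (ne_of_mem_places_of_mem_transitions
        ((mem_preset.mp hz).left_mem_places hu) hv).symm
    · have := card_ancestors_lt hacyc (mem_preset.mp hz)
      have := card_ancestors_lt hacyc (mem_preset.mp hz')
      omega
termination_by (N.ancestors u).card + (N.ancestors v).card

end PetriNet

namespace WorkflowNet

open PetriNet

variable {α : Type} [DecidableEq α] (W : WorkflowNet α)

lemma reflTransGen_source_sink {x : α} (hx : x ∈ W.nodes) :
    ReflTransGen W.Edge W.source x ∧ ReflTransGen W.Edge x W.sink := by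
  obtain ⟨w, ⟨hne, -, hchain⟩, hsource, hsink, hxw⟩ := W.all_on_path x hx
  rw [List.head?_eq_some_head hne, Option.some_inj] at hsource
  rw [List.getLast?_eq_some_getLast hne, Option.some_inj] at hsink
  exact ⟨hchain.induction (ReflTransGen W.Edge W.source ·) _ (fun _ _ h h' => h'.tail h)
      (fun _ => hsource ▸ .refl) x hxw,
    hchain.backwards_induction (ReflTransGen W.Edge · W.sink) _ (fun _ _ h h' => h'.head h)
      (fun _ => hsink ▸ .refl) x hxw⟩

lemma preset_nonempty {t : α} (ht : t ∈ W.transitions) : (W.preset t).Nonempty := by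
  obtain h | ⟨c, -, hct⟩ :=
    (W.reflTransGen_source_sink (Finset.mem_union_right _ ht)).1.cases_tail
  · exact absurd h.symm (ne_of_mem_places_of_mem_transitions W.source_mem ht)
  · exact ⟨c, mem_preset.mpr hct⟩

lemma postset_nonempty {t : α} (ht : t ∈ W.transitions) : (W.postset t).Nonempty := by
  obtain h | ⟨c, htc, -⟩ :=
    (W.reflTransGen_source_sink (Finset.mem_union_right _ ht)).2.cases_head
  · exact absurd h.symm (ne_of_mem_places_of_mem_transitions W.sink_mem ht)
  · exact ⟨c, mem_postset.mpr htc⟩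

lemma not_marksPair_terminalMarking (p q : α) : ¬ MarksPair W.terminalMarking p q := by
  unfold MarksPair terminalMarking
  split_ifs <;> simp_all

variable {W}

theorem not_marksPair_of_reflTransGen (hfc : W.FreeChoice) (hacyc : W.Acyclic)
    (hsound : W.Sound) {M : α → ℕ} (hM : W.Reachable W.initialMarking M) {p q : α}
    (hp : p ∈ W.places) (hq : q ∈ W.places) (hpq : ReflTransGen W.Edge p q) :
    ¬ MarksPair M p q := by
  intro hpair
  obtain ⟨M₁, t, hMM₁, hen, hpair₁, hconsumed⟩ :=
    exists_consuming_step (hsound.1 M hM).1 hpair (W.not_marksPair_terminalMarking p q)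
  have hM₁ := hM.trans hMM₁
  by_cases hpt : p ∈ W.preset t ∧ p ≠ q
  · -- By free choice the first transition `t₁` of the path `p ⇝ q` shares its preset with `t`,
    -- so it can fire instead, moving the token of `p` to the next place `r` of the path.
    obtain rfl | ⟨t₁, hpt₁, ht₁q⟩ := hpq.cases_head
    · exact hpt.2 rfl
    have ht₁ : t₁ ∈ W.transitions := hpt₁.mem_transitions hp
    obtain h | ⟨r, ht₁r, hrq⟩ := ht₁q.cases_head
    · exact ne_of_mem_places_of_mem_transitions hq ht₁ h.symm
    have hpre : W.preset t₁ = W.preset t := hfc.preset_eq hp hpt₁ (mem_preset.mp hpt.1)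
    have hen₁ : W.Enabled M₁ t₁ := ⟨ht₁, hpre ▸ hen.2⟩
    have hqt₁ : q ∉ W.preset t₁ :=
      fun h => hacyc.not_reflTransGen_of_edge (mem_preset.mp h) ht₁q
    have hqr : MarksPair (W.fire M₁ t₁) q r :=
      marksPair_fire (mem_postset.mpr ht₁r) (.inl ⟨hqt₁, hpair₁.symm.one_le_left⟩)
    have := card_descendants_lt hacyc hpt₁
    have := card_descendants_lt hacyc ht₁r
    exact not_marksPair_of_reflTransGen hfc hacyc hsound (hM₁.tail ⟨t₁, hen₁, rfl⟩)
      (ht₁r.mem_places ht₁) hq hrq hqr.symm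
  · -- `t` consumes a token of `q` and puts one on a place `s` after `q`; `p` keeps its token.
    have hpq' : p ∈ W.preset t → p = q := not_and_not_right.mp hpt
    have hqt : W.Edge q t := mem_preset.mp (hconsumed.elim (fun h => hpq' h ▸ h) id)
    obtain ⟨s, hs⟩ := W.postset_nonempty hen.1
    have hts : W.Edge t s := mem_postset.mp hs
    have hps : MarksPair (W.fire M₁ t) p s := by
      refine marksPair_fire hs ?_
      by_cases hpt' : p ∈ W.preset t
      · obtain rfl := hpq' hpt'
        exact .inr (by simpa [MarksPair] using hpair₁)
      · exact .inl ⟨hpt', hpair₁.one_le_left⟩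
    have := card_descendants_lt hacyc hqt
    have := card_descendants_lt hacyc hts
    exact not_marksPair_of_reflTransGen hfc hacyc hsound (hM₁.tail ⟨t, hen, rfl⟩) hp
      (hts.mem_places hen.1) ((hpq.tail hqt).tail hts) hps
termination_by (W.descendants p).card + (W.descendants q).card

lemma incomparable_of_marked (hfc : W.FreeChoice) (hacyc : W.Acyclic) (hsound : W.Sound)
    {M : α → ℕ} (hM : W.Reachable W.initialMarking M) {p q : α} (hp : p ∈ W.places)
    (hq : q ∈ W.places) (hpq : p ≠ q) (hMp : 1 ≤ M p) (hMq : 1 ≤ M q) :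
    W.Incomparable p q := by
  have hpair : MarksPair M p q := by rw [MarksPair, if_neg hpq]; exact ⟨hMp, hMq⟩
  exact ⟨fun h => not_marksPair_of_reflTransGen hfc hacyc hsound hM hp hq h hpair,
    fun h => not_marksPair_of_reflTransGen hfc hacyc hsound hM hq hp h hpair.symm⟩

end WorkflowNet

/-- In a sound acyclic free-choice workflow net, if `(x,y)` are concurrent then no node in
`HasPath(x)` has a path to `y`, and no node in `HasPath(y)` has a path to `x`. -/
theorem haspath_sets_no_cross_path {α : Type} [DecidableEq α] (W : WorkflowNet α)
    (hfc : W.toPetriNet.FreeChoice) (hacyc : W.toPetriNet.Acyclic) (hsound : W.Sound)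
    (x y : α) (hxy : (x, y) ∈ W.toPetriNet.Concurrent W.initialMarking) :
    (∀ a ∈ W.toPetriNet.HasPathSet x, y ∉ W.toPetriNet.HasPathSet a) ∧
    (∀ b ∈ W.toPetriNet.HasPathSet y, x ∉ W.toPetriNet.HasPathSet b) := by
  obtain ⟨R, hR, hxyR⟩ := Set.mem_sUnion.mp hxy
  have hxy : W.Incomparable x y :=
    PetriNet.incomparable_of_mem_of_subset_concStep hacyc (fun _ => W.preset_nonempty)
      (fun _ hM _ hp _ hq => W.incomparable_of_marked hfc hacyc hsound hM hp hq) hR hxyR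
  exact ⟨fun a hxa hay => hxy.1 (hxa.reflTransGen.trans hay.reflTransGen),
    fun b hyb hbx => hxy.2 (hyb.reflTransGen.trans hbx.reflTransGen)⟩
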